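/- For the map f: M_m → M_n defined on singletons and extended by f(⋃ I) = ⋃ f[I], and nonempty sets I ⊆ {1,...,m}, J ⊆ {1,...,n}: f(I) forces α_J under u_n if and only if I forces α_J under w_m, where α_J := ¬¬⋁_{j∈J} α_j; consequently f(I) and I agree on all formulas of the form σ(p) where σ(p) is a disjunction of formulas α_J. -/

import Mathlib

inductive Fml : Type where
  | atom : ℕ → Fml
  | bot  : Fml
  | and  : Fml → Fml → Fml
  | or   : Fml → Fml → Fml
  | imp  : Fml → Fml → Fml
deriving DecidableEq

/-- Intuitionistic negation: ¬φ := φ → ⊥. -/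
def Fml.neg (φ : Fml) : Fml := .imp φ .bot

/-- Biconditional. -/
def Fml.iff (φ ψ : Fml) : Fml := .and (.imp φ ψ) (.imp ψ φ)

/-- Disjunction of a list of formulas (empty disjunction is ⊥). -/
def disj : List Fml → Fml
  | [] => .bot
  | [φ] => φ
  | φ :: l => .or φ (disj l)

/-- Conjunction of a list of formulas (empty conjunction is ¬⊥). -/
def conj : List Fml → Fml
  | [] => Fml.neg .bot
  | [φ] => φ
  | φ :: l => .and φ (conj l)

/-- Substitution, extended homomorphically. -/
def Fml.subst (σ : ℕ → Fml) : Fml → Fml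
  | .atom p => σ p
  | .bot => .bot
  | .and φ ψ => .and (φ.subst σ) (ψ.subst σ)
  | .or φ ψ => .or (φ.subst σ) (ψ.subst σ)
  | .imp φ ψ => .imp (φ.subst σ) (ψ.subst σ)

/-- Hilbert-style provability for intuitionistic logic plus extra axioms `Ax`. -/
inductive Prov (Ax : Fml → Prop) : Fml → Prop where
  | ax {φ} : Ax φ → Prov Ax φ
  | k {φ ψ} : Prov Ax (.imp φ (.imp ψ φ))
  | s {φ ψ χ} : Prov Ax (.imp (.imp φ (.imp ψ χ)) (.imp (.imp φ ψ) (.imp φ χ)))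
  | andI {φ ψ} : Prov Ax (.imp φ (.imp ψ (.and φ ψ)))
  | andE₁ {φ ψ} : Prov Ax (.imp (.and φ ψ) φ)
  | andE₂ {φ ψ} : Prov Ax (.imp (.and φ ψ) ψ)
  | orI₁ {φ ψ} : Prov Ax (.imp φ (.or φ ψ))
  | orI₂ {φ ψ} : Prov Ax (.imp ψ (.or φ ψ))
  | orE {φ ψ χ} : Prov Ax (.imp (.imp φ χ) (.imp (.imp ψ χ) (.imp (.or φ ψ) χ)))
  | exfalso {φ} : Prov Ax (.imp .bot φ)
  | mp {φ ψ} : Prov Ax (.imp φ ψ) → Prov Ax φ → Prov Ax ψ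

/-- No extra axioms: pure intuitionistic logic is `Prov NoAx`. -/
def NoAx : Fml → Prop := fun _ => False

/-- Instances of the weak Kreisel–Putnam axiom schema. -/
def wKPAx : Fml → Prop := fun φ =>
  ∃ a b c : Fml, φ = .imp (.imp a.neg (.or b.neg c.neg))
    (.or (.imp a.neg b.neg) (.imp a.neg c.neg))

/-- Intuitionistic Kripke forcing over a preordered set of worlds. -/
def Force {W : Type} [Preorder W] (V : W → ℕ → Prop) : W → Fml → Prop
  | w, .atom p => V w p
  | _, .bot => False
  | w, .and φ ψ => Force V w φ ∧ Force V w ψ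
  | w, .or φ ψ => Force V w φ ∨ Force V w ψ
  | w, .imp φ ψ => ∀ v, w ≤ v → Force V v φ → Force V v ψ

/-- A valuation is monotone (persistent). -/
def MonoVal {W : Type} [Preorder W] (V : W → ℕ → Prop) : Prop :=
  ∀ ⦃w w'⦄, w ≤ w' → ∀ p, V w p → V w' p

/-- The Medvedev frame `M n`: nonempty subsets of `Fin n` ordered by reverse inclusion. -/
def Med (n : ℕ) : Type := {I : Finset (Fin n) // I.Nonempty}

instance {n : ℕ} : PartialOrder (Med n) where
  le I J := J.1 ⊆ I.1
  le_refl I := Finset.Subset.refl _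
  le_trans I J K h h' := Finset.Subset.trans h' h
  le_antisymm I J h h' := Subtype.ext (Finset.Subset.antisymm h' h)

instance {n : ℕ} : DecidableEq (Med n) := Subtype.instDecidableEq

/-- Validity on the Medvedev frame `M n`. -/
def MedValid (n : ℕ) (φ : Fml) : Prop :=
  ∀ V : Med n → ℕ → Prop, MonoVal V → ∀ w, Force V w φ

/-- Medvedev's logic of finite problems. -/
def ML (φ : Fml) : Prop := ∀ n, MedValid n φ

/-- The singleton world `{i}` of `M n`. -/
def single {n : ℕ} (i : Fin n) : Med n := ⟨{i}, Finset.singleton_nonempty i⟩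

/-- Exponentiation on ℕ∞ (anything involving ∞ gives ∞). -/
def epow : ℕ∞ → ℕ∞ → ℕ∞
  | some a, some b => some (a ^ b)
  | _, _ => ⊤

/-- Kreisel–Putnam rank. -/
def rank : Fml → ℕ∞
  | .imp _ .bot => 1
  | .or φ ψ => rank φ + rank ψ
  | .and φ ψ => rank φ * rank ψ
  | .imp φ ψ => epow (rank ψ) (rank φ)
  | _ => ⊤

/-- Disjunction of `α i` over a finite index set. -/
noncomputable def bigOrOn {n : ℕ} (α : Fin n → Fml) (I : Finset (Fin n)) : Fml :=
  disj (I.toList.map α)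

/-- `α_I := ¬¬⋁_{i ∈ I} α_i`. -/
noncomputable def alphaF {n : ℕ} (α : Fin n → Fml) (I : Finset (Fin n)) : Fml :=
  Fml.neg (Fml.neg (bigOrOn α I))

/-!
A world of the Medvedev frame forces a double negation `¬¬φ` exactly when `{i}` forces `φ` for
every element `i` of it, singletons being maximal. Hence `I` forces `α_J` under `w` iff each `{i}`,
`i ∈ I`, forces some `α_j` with `j ∈ J`, i.e. iff the unique such `j`, which is `f {i}`, lies
in `J`; and `f I ⊆ J` says the same, because `f I` is the union of the `f {i}`.
-/

lemma force_disj {W : Type} [Preorder W] (V : W → ℕ → Prop) (v : W) :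
    ∀ L : List Fml, Force V v (disj L) ↔ ∃ φ ∈ L, Force V v φ
  | [] => by simp [disj, Force]
  | [φ] => by simp [disj]
  | φ :: ψ :: l => by
    simp only [disj, Force, force_disj V v (ψ :: l), List.exists_mem_cons_iff]

lemma force_disj_congr {W W' : Type} [Preorder W] [Preorder W'] {V : W → ℕ → Prop}
    {V' : W' → ℕ → Prop} {v : W} {v' : W'} {L : List Fml}
    (h : ∀ φ ∈ L, Force V v φ ↔ Force V' v' φ) :
    Force V v (disj L) ↔ Force V' v' (disj L) := by
  rw [force_disj, force_disj]
  exact exists_congr fun φ => and_congr_right (h φ)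

lemma force_bigOrOn {W : Type} [Preorder W] (V : W → ℕ → Prop) (v : W) {n : ℕ}
    (α : Fin n → Fml) (J : Finset (Fin n)) :
    Force V v (bigOrOn α J) ↔ ∃ j ∈ J, Force V v (α j) := by
  simp [bigOrOn, force_disj]

lemma force_neg {W : Type} [Preorder W] (V : W → ℕ → Prop) (v : W) (φ : Fml) :
    Force V v φ.neg ↔ ∀ v', v ≤ v' → ¬ Force V v' φ :=
  Iff.rfl

namespace Med

variable {n : ℕ}

lemma le_single_iff {v : Med n} {i : Fin n} : v ≤ single i ↔ i ∈ v.1 :=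
  Finset.singleton_subset_iff

lemma single_le_iff {v : Med n} {i : Fin n} : single i ≤ v ↔ v = single i := by
  refine ⟨fun h => Subtype.ext ?_, fun h => h ▸ le_rfl⟩
  exact Finset.eq_singleton_iff_nonempty_unique_mem.2
    ⟨v.2, fun x hx => Finset.mem_singleton.1 (h hx)⟩

lemma force_neg_neg_iff (V : Med n → ℕ → Prop) (v : Med n) (φ : Fml) :
    Force V v φ.neg.neg ↔ ∀ i ∈ v.1, Force V (single i) φ := by
  simp only [force_neg, not_forall, not_not, exists_prop]
  constructor
  · intro h i hi
    obtain ⟨v'', hle, hφ⟩ := h (single i) (le_single_iff.2 hi)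
    rwa [single_le_iff.1 hle] at hφ
  · intro h v' hle
    obtain ⟨i, hi⟩ := v'.2
    exact ⟨single i, le_single_iff.2 hi, h i (hle hi)⟩

lemma force_alphaF_iff (V : Med n → ℕ → Prop) (v : Med n) {k : ℕ} (α : Fin k → Fml)
    (J : Finset (Fin k)) :
    Force V v (alphaF α J) ↔ ∀ i ∈ v.1, ∃ j ∈ J, Force V (single i) (α j) := by
  simp only [alphaF, force_neg_neg_iff, force_bigOrOn]

end Med

theorem stmt19_general (m n : ℕ) (α : Fin n → Fml)
    (w : Med m → ℕ → Prop) (u : Med n → ℕ → Prop)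
    (huniv : ∀ (K : Med n) (J : Finset (Fin n)), J.Nonempty →
      (Force u K (alphaF α J) ↔ K.1 ⊆ J))
    (hsing : ∀ i : Fin m, ∃! j : Fin n, Force w (single i) (α j))
    (f : Med m → Med n)
    (hf1 : ∀ i : Fin m, ∃ j : Fin n, f (single i) = single j ∧ Force w (single i) (α j))
    (hf2 : ∀ I : Med m, (f I).1 = I.1.biUnion (fun i => (f (single i)).1)) :
    (∀ (I : Med m) (J : Finset (Fin n)), J.Nonempty →
      (Force u (f I) (alphaF α J) ↔ Force w I (alphaF α J))) ∧
    (∀ (I : Med m) (Ls : List (Finset (Fin n))), (∀ J ∈ Ls, J.Nonempty) →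
      (Force u (f I) (disj (Ls.map (alphaF α))) ↔
        Force w I (disj (Ls.map (alphaF α))))) := by
  have key : ∀ (I : Med m) (J : Finset (Fin n)), J.Nonempty →
      (Force u (f I) (alphaF α J) ↔ Force w I (alphaF α J)) := by
    intro I J hJ
    rw [huniv (f I) J hJ, hf2 I, Finset.biUnion_subset, Med.force_alphaF_iff]
    refine forall₂_congr fun i _ => ?_
    obtain ⟨j, hfj, hαj⟩ := hf1 i
    obtain ⟨j₀, -, huniq⟩ := hsing i
    rw [hfj, single, Finset.singleton_subset_iff]
    refine ⟨fun hj => ⟨j, hj, hαj⟩, ?_⟩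
    rintro ⟨j', hj', hαj'⟩
    rwa [huniq j hαj, ← huniq j' hαj']
  refine ⟨key, fun I Ls hLs => force_disj_congr ?_⟩
  simp only [List.mem_map]
  rintro _ ⟨J, hJ, rfl⟩
  exact key I J (hLs J hJ)

/-- for the p-morphism `f : M m → M n` built from `w`, the worlds `f I`
(under the universal valuation `u`) and `I` (under `w`) agree on all formulas `α_J`, and
hence on all disjunctions of such formulas. -/
theorem stmt19 (m n : ℕ) (α : Fin n → Fml)
    (w : Med m → ℕ → Prop) (u : Med n → ℕ → Prop)
    (hw : MonoVal w) (hu : MonoVal u)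
    (huniv : ∀ (K : Med n) (J : Finset (Fin n)), J.Nonempty →
      (Force u K (alphaF α J) ↔ K.1 ⊆ J))
    (hsing : ∀ i : Fin m, ∃! j : Fin n, Force w (single i) (α j))
    (hexh : ∀ I : Med m, Force w I (Fml.neg (Fml.neg (disj (List.ofFn α)))))
    (f : Med m → Med n)
    (hf1 : ∀ i : Fin m, ∃ j : Fin n, f (single i) = single j ∧ Force w (single i) (α j))
    (hf2 : ∀ I : Med m, (f I).1 = I.1.biUnion (fun i => (f (single i)).1)) :
    (∀ (I : Med m) (J : Finset (Fin n)), J.Nonempty →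
      (Force u (f I) (alphaF α J) ↔ Force w I (alphaF α J))) ∧
    (∀ (I : Med m) (Ls : List (Finset (Fin n))), (∀ J ∈ Ls, J.Nonempty) →
      (Force u (f I) (disj (Ls.map (alphaF α))) ↔
        Force w I (disj (Ls.map (alphaF α))))) :=
  stmt19_general m n α w u huniv hsing f hf1 hf2
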